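/- arXiv:1012.1287 — 3 statements merged into one kernel-verified Lean document; each statement's English description precedes it below -/
import Mathlib

section
/- Let A : ℝⁿ → ℝⁿ be symmetric positive semidefinite with matrix entries a_{ij} = ⟨Ae_i, e_j⟩ in a basis e₁,…,e_n, and suppose each row has at most c nonzero off-diagonal structure in the sense that for each i, the set S(i) = {j : a_{ij} ≠ 0} has cardinality at most c. Then for all v = Σᵢ vᵢeᵢ, ⟨Av, v⟩ ≤ c·Σᵢ vᵢ²·a_{ii}; i.e., A is bounded above by c times its diagonal part. -/
/-!
Every entry of a positive semidefinite matrix satisfies `a_ij² ≤ a_ii a_jj` (its 2 × 2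
principal minors are nonnegative), so `2 v_i a_ij v_j ≤ v_i² a_ii + v_j² a_jj`. Summing this
over the nonzero pattern of `A`, which is symmetric, counts each diagonal term `v_i² a_ii`
once for every nonzero entry of row `i`, hence at most `c` times.
-/

open Matrix Finset

theorem two_mul_mul_mul_le_of_sq_le {a p q : ℝ} (hp : 0 ≤ p) (hq : 0 ≤ q)
    (h : a ^ 2 ≤ p * q) (x y : ℝ) : 2 * (x * a * y) ≤ x ^ 2 * p + y ^ 2 * q := by
  have ha : |a| ≤ √p * √q := by
    rw [← Real.sqrt_mul hp, ← Real.sqrt_sq_eq_abs]; exact Real.sqrt_le_sqrt h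
  calc 2 * (x * a * y) ≤ 2 * (|x| * |a| * |y|) := by
        rw [← abs_mul, ← abs_mul]; linarith [le_abs_self (x * a * y)]
    _ ≤ 2 * ((|x| * √p) * (|y| * √q)) := by
        have := mul_le_mul_of_nonneg_left ha (mul_nonneg (abs_nonneg x) (abs_nonneg y))
        linarith
    _ ≤ (|x| * √p) ^ 2 + (|y| * √q) ^ 2 := by rw [← mul_assoc]; exact two_mul_le_add_sq _ _
    _ = x ^ 2 * p + y ^ 2 * q := by
        rw [mul_pow, mul_pow, sq_abs, sq_abs, Real.sq_sqrt hp, Real.sq_sqrt hq]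

theorem Finset.sum_sum_eq_sum_card_nsmul_of_mem_iff {ι M : Type*} [Fintype ι] [AddCommMonoid M]
    {s : ι → Finset ι} (hs : ∀ i j, j ∈ s i ↔ i ∈ s j) (f : ι → M) :
    ∑ i, ∑ j ∈ s i, f j = ∑ i, #(s i) • f i := by
  rw [sum_comm' (s' := s) (t' := univ) fun i j => by
    simp only [mem_univ, true_and, and_true, hs i j]]
  simp only [sum_const]

namespace Matrix.PosSemidef

variable {ι : Type*} {A : Matrix ι ι ℝ}

theorem sq_apply_le_mul_diag (hA : A.PosSemidef) (i j : ι) : A i j ^ 2 ≤ A i i * A j j := by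
  have hdet := (hA.submatrix ![i, j]).det_nonneg
  simp only [det_fin_two, submatrix_apply, Matrix.cons_val_zero, Matrix.cons_val_one] at hdet
  rw [show A j i = A i j from hA.1.apply i j, ← sq] at hdet
  linarith

theorem dotProduct_mulVec_le_sum_card_mul [Fintype ι] (hA : A.PosSemidef) (v : ι → ℝ) :
    v ⬝ᵥ A *ᵥ v ≤ ∑ i, (#{j | A i j ≠ 0} : ℝ) * (v i ^ 2 * A i i) := by
  set d : ι → ℝ := fun i => v i ^ 2 * A i i
  have hexpand : v ⬝ᵥ A *ᵥ v = ∑ i, ∑ j with A i j ≠ 0, v i * A i j * v j := by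
    simp only [dotProduct, mulVec, mul_sum, ← mul_assoc]
    exact sum_congr rfl fun i _ => (sum_filter_of_ne fun j _ h =>
      right_ne_zero_of_mul (left_ne_zero_of_mul h)).symm
  have hsymm (i j : ι) :
      j ∈ ({j | A i j ≠ 0} : Finset ι) ↔ i ∈ ({k | A j k ≠ 0} : Finset ι) := by
    simp only [mem_filter, mem_univ, true_and, show A j i = A i j from hA.1.apply i j]
  have hdouble : 2 * (v ⬝ᵥ A *ᵥ v) ≤ ∑ i, ∑ j with A i j ≠ 0, (d i + d j) := by
    rw [hexpand, mul_sum]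
    refine sum_le_sum fun i _ => ?_
    rw [mul_sum]
    exact sum_le_sum fun j _ => two_mul_mul_mul_le_of_sq_le hA.diag_nonneg hA.diag_nonneg
      (hA.sq_apply_le_mul_diag i j) (v i) (v j)
  simp only [sum_add_distrib, sum_const, sum_sum_eq_sum_card_nsmul_of_mem_iff hsymm d,
    ← two_mul, nsmul_eq_mul] at hdouble
  linarith

end Matrix.PosSemidef

theorem psd_bounded_by_diagonal_sparse
    (n : ℕ) (A : Matrix (Fin n) (Fin n) ℝ) (hA : A.PosSemidef)
    (c : ℕ)
    (hsparse : ∀ i : Fin n, (Finset.univ.filter fun j => A i j ≠ 0).card ≤ c) :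
    ∀ v : Fin n → ℝ, v ⬝ᵥ A.mulVec v ≤ (c : ℝ) * ∑ i, v i ^ 2 * A i i := by
  intro v
  calc v ⬝ᵥ A *ᵥ v ≤ ∑ i, (#{j | A i j ≠ 0} : ℝ) * (v i ^ 2 * A i i) :=
        hA.dotProduct_mulVec_le_sum_card_mul v
    _ ≤ ∑ i, (c : ℝ) * (v i ^ 2 * A i i) := by
        gcongr with i
        · exact mul_nonneg (sq_nonneg _) hA.diag_nonneg
        · exact_mod_cast hsparse i
    _ = (c : ℝ) * ∑ i, v i ^ 2 * A i i := (mul_sum ..).symm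
end

section
/- Let V be a finite-dimensional real inner product space, A symmetric positive definite on V, and B := R⁻¹ + ι∘(A_C)⁻¹∘Q, where W ⊆ V is a subspace with inclusion ι : W → V, Q : V → W is the adjoint of ι (the orthogonal projection), R is symmetric positive definite on V, and A_C := Q∘A∘ι is the restriction of A to W assumed SPD. Then B is symmetric positive definite and for every v ∈ V: ⟨B⁻¹v, v⟩ = inf over χ ∈ W of [⟨R(v-χ), v-χ⟩ + ⟨A_C χ, χ⟩]. -/
open RealInnerProductSpace

theorem two_level_additive_preconditioner_identity
    {V : Type*} [NormedAddCommGroup V] [InnerProductSpace ℝ V] [FiniteDimensional ℝ V]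
    (W : Submodule ℝ V)
    (A R S : V →ₗ[ℝ] V) (Q : V →ₗ[ℝ] W) (AC T : W →ₗ[ℝ] W)
    (hAsym : ∀ u v : V, ⟪A u, v⟫ = ⟪u, A v⟫)
    (hApos : ∀ v : V, v ≠ 0 → 0 < ⟪A v, v⟫)
    (hRsym : ∀ u v : V, ⟪R u, v⟫ = ⟪u, R v⟫)
    (hRpos : ∀ v : V, v ≠ 0 → 0 < ⟪R v, v⟫)
    (hQ : ∀ (v : V) (w : W), ⟪Q v, w⟫ = ⟪v, (w : V)⟫)
    (hAC : AC = Q ∘ₗ A ∘ₗ W.subtype)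
    (hACpos : ∀ w : W, w ≠ 0 → 0 < ⟪AC w, w⟫)
    (hS : S ∘ₗ R = LinearMap.id) (hS' : R ∘ₗ S = LinearMap.id)
    (hT : T ∘ₗ AC = LinearMap.id) (hT' : AC ∘ₗ T = LinearMap.id)
    (B : V →ₗ[ℝ] V) (hB : B = S + W.subtype ∘ₗ T ∘ₗ Q) :
    (∀ u v : V, ⟪B u, v⟫ = ⟪u, B v⟫) ∧ (∀ v : V, v ≠ 0 → 0 < ⟪B v, v⟫) ∧
    (∀ Binv : V →ₗ[ℝ] V, Binv ∘ₗ B = LinearMap.id → B ∘ₗ Binv = LinearMap.id →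
      ∀ v : V, ⟪Binv v, v⟫ =
        ⨅ χ : W, (⟪R (v - (χ : V)), v - (χ : V)⟫ + ⟪AC χ, χ⟫)) := by
  -- basic pointwise identities
  have hRS : ∀ x : V, R (S x) = x := fun x => by
    simpa using LinearMap.congr_fun hS' x
  have hACT : ∀ w : W, AC (T w) = w := fun w => by
    simpa using LinearMap.congr_fun hT' w
  have hACapp : ∀ w : W, AC w = Q (A (w : V)) := fun w => by
    rw [hAC]; rfl
  -- symmetry of AC
  have hACsym : ∀ u w : W, ⟪AC u, w⟫ = ⟪u, AC w⟫ := by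
    intro u w
    rw [hACapp, hACapp, hQ, hAsym, real_inner_comm, ← hQ, real_inner_comm]
  -- symmetry of S
  have hSsym : ∀ x y : V, ⟪S x, y⟫ = ⟪x, S y⟫ := by
    intro x y
    calc ⟪S x, y⟫ = ⟪S x, R (S y)⟫ := by rw [hRS]
    _ = ⟪R (S x), S y⟫ := (hRsym _ _).symm
    _ = ⟪x, S y⟫ := by rw [hRS]
  -- symmetry of T
  have hTsym : ∀ x y : W, ⟪T x, y⟫ = ⟪x, T y⟫ := by
    intro x y
    calc ⟪T x, y⟫ = ⟪T x, AC (T y)⟫ := by rw [hACT]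
    _ = ⟪AC (T x), T y⟫ := (hACsym _ _).symm
    _ = ⟪x, T y⟫ := by rw [hACT]
  have hQ' : ∀ (w : W) (x : V), ⟪(w : V), x⟫ = ⟪w, Q x⟫ := fun w x => by
    rw [real_inner_comm, ← hQ, real_inner_comm]
  have hBapp : ∀ x : V, B x = S x + ((T (Q x) : W) : V) := fun x => by
    rw [hB]; rfl
  -- symmetry of B
  have hBsym : ∀ u v : V, ⟪B u, v⟫ = ⟪u, B v⟫ := by
    intro u v
    rw [hBapp, hBapp, inner_add_left, inner_add_right, hSsym]
    congr 1
    rw [hQ', hTsym, ← hQ]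
  refine ⟨hBsym, ?_, ?_⟩
  · -- positivity
    intro v hv
    have h1 : ⟪B v, v⟫ = ⟪S v, v⟫ + ⟪T (Q v), Q v⟫ := by
      rw [hBapp, inner_add_left]
      congr 1
      rw [hQ']
    have hSv : S v ≠ 0 := fun h => hv (by rw [← hRS v, h, map_zero])
    have hSpos : 0 < ⟪S v, v⟫ := by
      have h2 : ⟪S v, v⟫ = ⟪R (S v), S v⟫ := by
        rw [hRsym, hRS]
      rw [h2]; exact hRpos _ hSv
    have hTnn : 0 ≤ ⟪T (Q v), Q v⟫ := by
      by_cases h : T (Q v) = 0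
      · have h0 : Q v = 0 := by rw [← hACT (Q v), h, map_zero]
        rw [h0, inner_zero_right]
      · have h2 : ⟪T (Q v), Q v⟫ = ⟪AC (T (Q v)), T (Q v)⟫ := by
          rw [hACsym, hACT]
        rw [h2]; exact le_of_lt (hACpos _ h)
    rw [h1]; linarith
  · -- the main identity
    intro Binv hBi hBi' v
    set u := Binv v with hu
    have hBu : B u = v := by simpa using LinearMap.congr_fun hBi' v
    set χs : W := T (Q u) with hχs
    have hcoe : (χs : V) = v - S u := by
      have h := hBapp u
      rw [hBu] at h
      rw [h]; abel
    have hRp : R (v - (χs : V)) = u := by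
      rw [hcoe, sub_sub_cancel, hRS]
    have hACχs : AC χs = Q u := hACT (Q u)
    -- value at the minimizer
    have hval : ⟪R (v - (χs : V)), v - (χs : V)⟫ + ⟪AC χs, χs⟫ = ⟪u, v⟫ := by
      rw [hRp, hACχs, inner_sub_right, hQ]
      ring
    -- generic expansion lemmas
    have expR : ∀ x y : V, ⟪R (x - y), x - y⟫
        = ⟪R x, x⟫ - ⟪R x, y⟫ - ⟪R y, x⟫ + ⟪R y, y⟫ := by
      intro x y
      rw [map_sub, inner_sub_left, inner_sub_right, inner_sub_right]
      ring
    have expA : ∀ x y : W, ⟪AC (x + y), x + y⟫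
        = ⟪AC x, x⟫ + ⟪AC x, y⟫ + ⟪AC y, x⟫ + ⟪AC y, y⟫ := by
      intro x y
      rw [map_add, inner_add_left, inner_add_right, inner_add_right]
      ring
    -- key expansion
    have hkey : ∀ χ : W,
        ⟪R (v - (χ : V)), v - (χ : V)⟫ + ⟪AC χ, χ⟫
          = ⟪u, v⟫ + (⟪R ((χ : V) - (χs : V)), (χ : V) - (χs : V)⟫
              + ⟪AC (χ - χs), χ - χs⟫) := by
      intro χ
      have hsplit : v - (χ : V) = (v - (χs : V)) - ((χ : V) - (χs : V)) := by abel
      have c1 : ⟪R (v - (χs : V)), (χ : V) - (χs : V)⟫ = ⟪u, (χ : V) - (χs : V)⟫ := by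
        rw [hRp]
      have c2 : ⟪R ((χ : V) - (χs : V)), v - (χs : V)⟫ = ⟪u, (χ : V) - (χs : V)⟫ := by
        rw [hRsym, hRp, real_inner_comm]
      have e1 : ⟪R (v - (χ : V)), v - (χ : V)⟫
          = ⟪R (v - (χs : V)), v - (χs : V)⟫ - 2 * ⟪u, (χ : V) - (χs : V)⟫
            + ⟪R ((χ : V) - (χs : V)), (χ : V) - (χs : V)⟫ := by
        rw [hsplit, expR, c1, c2]
        ring
      have hcross : ⟪AC χs, χ - χs⟫ = ⟪u, (χ : V) - (χs : V)⟫ := by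
        rw [hACχs, hQ]
        norm_cast
      have hcross' : ⟪AC (χ - χs), χs⟫ = ⟪u, (χ : V) - (χs : V)⟫ := by
        rw [hACsym, real_inner_comm, hcross]
      have hχeq : χs + (χ - χs) = χ := by abel
      have e2 : ⟪AC χ, χ⟫
          = ⟪AC χs, χs⟫ + 2 * ⟪u, (χ : V) - (χs : V)⟫ + ⟪AC (χ - χs), χ - χs⟫ := by
        calc ⟪AC χ, χ⟫ = ⟪AC (χs + (χ - χs)), χs + (χ - χs)⟫ := by rw [hχeq]
        _ = ⟪AC χs, χs⟫ + ⟪AC χs, χ - χs⟫ + ⟪AC (χ - χs), χs⟫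
              + ⟪AC (χ - χs), χ - χs⟫ := expA _ _
        _ = _ := by rw [hcross, hcross']; ring
      rw [e1, e2, ← hval]
      ring
    have hnn : ∀ χ : W, 0 ≤ ⟪R ((χ : V) - (χs : V)), (χ : V) - (χs : V)⟫
        + ⟪AC (χ - χs), χ - χs⟫ := by
      intro χ
      have h1 : 0 ≤ ⟪R ((χ : V) - (χs : V)), (χ : V) - (χs : V)⟫ := by
        by_cases h : (χ : V) - (χs : V) = 0
        · rw [h, inner_zero_right]
        · exact le_of_lt (hRpos _ h)
      have h2 : 0 ≤ ⟪AC (χ - χs), χ - χs⟫ := by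
        by_cases h : χ - χs = 0
        · rw [h, inner_zero_right]
        · exact le_of_lt (hACpos _ h)
      linarith
    have hle : ∀ χ : W, ⟪u, v⟫ ≤ ⟪R (v - (χ : V)), v - (χ : V)⟫ + ⟪AC χ, χ⟫ := by
      intro χ
      rw [hkey χ]
      linarith [hnn χ]
    have hbdd : BddBelow (Set.range fun χ : W =>
        ⟪R (v - (χ : V)), v - (χ : V)⟫ + ⟪AC χ, χ⟫) := by
      refine ⟨⟪u, v⟫, ?_⟩
      rintro x ⟨χ, rfl⟩
      exact hle χ
    refine le_antisymm (le_ciInf hle) ?_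
    calc (⨅ χ : W, (⟪R (v - (χ : V)), v - (χ : V)⟫ + ⟪AC χ, χ⟫))
        ≤ ⟪R (v - (χs : V)), v - (χs : V)⟫ + ⟪AC χs, χs⟫ := ciInf_le hbdd χs
    _ = ⟪u, v⟫ := hval
end

section
/- Let W₀, …, W_{J+1} be subspaces of a finite-dimensional real inner product space V with V = W₀ + ⋯ + W_{J+1}, let a₀(·,·) be an SPD bilinear form on W₀ and R_j (j=1,…,J+1) SPD operators on W_j. Define B := ι₀ a₀⁻¹ Q₀ + Σ_{j=1}^{J+1} ι_j R_j⁻¹ Q_j where ι_j is the inclusion and Q_j its adjoint. Then B is SPD and ⟨B⁻¹v, v⟩ = inf over decompositions v = Σ_j w_j with w_j ∈ W_j of [a₀(w₀,w₀) + Σ_{j=1}^{J+1} ⟨R_j w_j, w_j⟩]. -/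
/-!
With `P := ∑ⱼ ιⱼ Tⱼ Qⱼ` and `Tⱼ = Rⱼ⁻¹`, one has `⟪P u, v⟫ = ∑ⱼ ⟪Tⱼ Qⱼ u, Qⱼ v⟫`, so `P` is
symmetric, and it is positive definite because, when the `Wⱼ` span, `v ≠ 0` cannot satisfy
`Qⱼ v = 0` for all `j`. For `v = P u`, completing the square in each `Wⱼ` gives
`2 ⟪Qⱼ u, wⱼ⟫ - ⟪Qⱼ u, Tⱼ Qⱼ u⟫ ≤ ⟪Rⱼ wⱼ, wⱼ⟫`; summing over any decomposition `v = ∑ⱼ wⱼ`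
bounds its energy below by `⟪u, v⟫`, with equality for `wⱼ = Tⱼ Qⱼ u`. The coarse form `a₀`
simply plays the role of `R₀`.
-/

open RealInnerProductSpace

theorem Finset.sum_update_eq_add_sum_erase {ι M : Type*} [Fintype ι] [DecidableEq ι]
    [AddCommMonoid M] {β : ι → Type*} (f : ∀ i, β i) (i : ι) (b : β i) (g : ∀ i, β i → M) :
    ∑ j, g j (Function.update f i b j) = g i b + ∑ j ∈ Finset.univ.erase i, g j (f j) := by
  rw [← Finset.add_sum_erase _ _ (Finset.mem_univ i), Function.update_self]
  congr 1
  exact Finset.sum_congr rfl fun j hj => by rw [Function.update_of_ne (Finset.ne_of_mem_erase hj)]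

theorem inner_map_self_nonneg_of_pos {E : Type*} [NormedAddCommGroup E] [InnerProductSpace ℝ E]
    {S : E →ₗ[ℝ] E} (hS : ∀ x, x ≠ 0 → 0 < ⟪S x, x⟫) (x : E) : 0 ≤ ⟪S x, x⟫ := by
  rcases eq_or_ne x 0 with rfl | hx
  · simp
  · exact (hS x hx).le

section RightInverse

variable {E : Type*} [NormedAddCommGroup E] [InnerProductSpace ℝ E] {R T : E →ₗ[ℝ] E}

theorem LinearMap.IsSymmetric.of_comp_eq_id (hR : R.IsSymmetric) (hRT : R ∘ₗ T = LinearMap.id) :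
    T.IsSymmetric := by
  have hRT' : ∀ x, R (T x) = x := LinearMap.congr_fun hRT
  intro x y
  calc ⟪T x, y⟫ = ⟪T x, R (T y)⟫ := by rw [hRT']
    _ = ⟪R (T x), T y⟫ := (hR _ _).symm
    _ = ⟪x, T y⟫ := by rw [hRT']

theorem inner_map_self_pos_of_comp_eq_id (hR : R.IsSymmetric)
    (hRpos : ∀ x, x ≠ 0 → 0 < ⟪R x, x⟫) (hRT : R ∘ₗ T = LinearMap.id) :
    ∀ x, x ≠ 0 → 0 < ⟪T x, x⟫ := by
  have hRT' : ∀ x, R (T x) = x := LinearMap.congr_fun hRT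
  intro x hx
  have hTx : T x ≠ 0 := fun h => hx (by rw [← hRT' x, h, map_zero])
  calc (0 : ℝ) < ⟪R (T x), T x⟫ := hRpos _ hTx
    _ = ⟪T x, x⟫ := by rw [hR, hRT']

/-- Completing the square: `⟪R (w - T y), w - T y⟫ ≥ 0`. -/
theorem two_mul_inner_sub_le_inner_map_self (hR : R.IsSymmetric) (hRnonneg : ∀ x, 0 ≤ ⟪R x, x⟫)
    (hRT : R ∘ₗ T = LinearMap.id) (y w : E) :
    2 * ⟪y, w⟫ - ⟪y, T y⟫ ≤ ⟪R w, w⟫ := by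
  have hRT' : R (T y) = y := LinearMap.congr_fun hRT y
  have hsq := hRnonneg (w - T y)
  rw [map_sub, inner_sub_left, inner_sub_right, inner_sub_right, hR w (T y), hRT'] at hsq
  linarith [real_inner_comm w y, real_inner_comm y (T y)]

end RightInverse

section AdditivePreconditioner

variable {ι : Type*} [Fintype ι] {E : Type*} [NormedAddCommGroup E] [InnerProductSpace ℝ E]
  (W : ι → Submodule ℝ E) (Q : ∀ j, E →ₗ[ℝ] W j) (T : ∀ j, W j →ₗ[ℝ] W j)

def additivePreconditioner : E →ₗ[ℝ] E :=
  ∑ j, (W j).subtype ∘ₗ T j ∘ₗ Q j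

variable {W Q T}

theorem additivePreconditioner_apply (u : E) :
    additivePreconditioner W Q T u = ∑ j, (T j (Q j u) : E) := by
  simp [additivePreconditioner, LinearMap.sum_apply]

variable (hQ : ∀ j (v : E) (w : W j), ⟪Q j v, w⟫ = ⟪v, (w : E)⟫)
include hQ

theorem sum_inner_adjoint_eq (u : E) (w : ∀ j, W j) :
    ∑ j, ⟪Q j u, w j⟫ = ⟪u, ∑ j, (w j : E)⟫ := by
  rw [inner_sum]
  exact Finset.sum_congr rfl fun j _ => hQ j u (w j)

theorem inner_additivePreconditioner_left (u v : E) :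
    ⟪additivePreconditioner W Q T u, v⟫ = ∑ j, ⟪T j (Q j u), Q j v⟫ := by
  rw [real_inner_comm, additivePreconditioner_apply, ← sum_inner_adjoint_eq hQ]
  exact Finset.sum_congr rfl fun j _ => real_inner_comm _ _

theorem additivePreconditioner_isSymmetric (hT : ∀ j, (T j).IsSymmetric) :
    (additivePreconditioner W Q T).IsSymmetric := by
  intro u v
  rw [inner_additivePreconditioner_left hQ, real_inner_comm (additivePreconditioner W Q T v) u,
    inner_additivePreconditioner_left hQ]
  exact Finset.sum_congr rfl fun j _ => by rw [hT, real_inner_comm]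

theorem inner_additivePreconditioner_self_pos
    (hspan : ∀ v : E, ∃ w : ∀ j, W j, ∑ j, (w j : E) = v)
    (hT : ∀ j (x : W j), x ≠ 0 → 0 < ⟪T j x, x⟫) {v : E} (hv : v ≠ 0) :
    0 < ⟪additivePreconditioner W Q T v, v⟫ := by
  have hQv : ∃ j, Q j v ≠ 0 := by
    by_contra! hzero
    obtain ⟨w, hw⟩ := hspan v
    have hvv : ⟪v, v⟫ = 0 :=
      calc ⟪v, v⟫ = ∑ j, ⟪Q j v, w j⟫ := by rw [sum_inner_adjoint_eq hQ, hw]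
        _ = 0 := by simp [hzero]
    exact hv (inner_self_eq_zero.mp hvv)
  obtain ⟨j, hj⟩ := hQv
  rw [inner_additivePreconditioner_left hQ]
  exact Finset.sum_pos' (fun i _ => inner_map_self_nonneg_of_pos (hT i) _)
    ⟨j, Finset.mem_univ j, hT j _ hj⟩

variable {R : ∀ j, W j →ₗ[ℝ] W j} (hRT : ∀ j, R j ∘ₗ T j = LinearMap.id)
include hRT

theorem inner_additivePreconditioner_self_le_sum (hR : ∀ j, (R j).IsSymmetric)
    (hRnonneg : ∀ j (x : W j), 0 ≤ ⟪R j x, x⟫) (u : E) (w : ∀ j, W j)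
    (hw : ∑ j, (w j : E) = additivePreconditioner W Q T u) :
    ⟪u, additivePreconditioner W Q T u⟫ ≤ ∑ j, ⟪R j (w j), w j⟫ := by
  have hsq := Finset.sum_le_sum fun j (_ : j ∈ Finset.univ) =>
    two_mul_inner_sub_le_inner_map_self (hR j) (hRnonneg j) (hRT j) (Q j u) (w j)
  rw [Finset.sum_sub_distrib, ← Finset.mul_sum, sum_inner_adjoint_eq hQ, hw,
    sum_inner_adjoint_eq hQ, ← additivePreconditioner_apply] at hsq
  linarith

theorem sum_inner_map_self_comp_adjoint (u : E) :
    ∑ j, ⟪R j (T j (Q j u)), T j (Q j u)⟫ = ⟪u, additivePreconditioner W Q T u⟫ := by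
  have hRT' : ∀ j x, R j (T j x) = x := fun j => LinearMap.congr_fun (hRT j)
  simp only [hRT', sum_inner_adjoint_eq hQ, additivePreconditioner_apply]

theorem inner_additivePreconditioner_self_eq_iInf (hR : ∀ j, (R j).IsSymmetric)
    (hRnonneg : ∀ j (x : W j), 0 ≤ ⟪R j x, x⟫) (u : E) :
    ⟪u, additivePreconditioner W Q T u⟫ =
      ⨅ w : {w : ∀ j, W j // ∑ j, (w j : E) = additivePreconditioner W Q T u},
        ∑ j, ⟪R j (w.1 j), w.1 j⟫ := by
  let wopt : {w : ∀ j, W j // ∑ j, (w j : E) = additivePreconditioner W Q T u} :=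
    ⟨fun j => T j (Q j u), (additivePreconditioner_apply u).symm⟩
  have hlower := fun w : {w : ∀ j, W j // ∑ j, (w j : E) = additivePreconditioner W Q T u} =>
    inner_additivePreconditioner_self_le_sum hQ hRT hR hRnonneg u w.1 w.2
  have : Nonempty _ := ⟨wopt⟩
  exact le_antisymm (le_ciInf hlower) (ciInf_le_of_le ⟨_, Set.forall_mem_range.2 hlower⟩ wopt
    (sum_inner_map_self_comp_adjoint hQ hRT u).le)

end AdditivePreconditioner

theorem multilevel_additive_preconditioner_identity_general
    {V : Type*} [NormedAddCommGroup V] [InnerProductSpace ℝ V]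
    (J : ℕ) (W : Fin (J + 2) → Submodule ℝ V)
    (hspan : ∀ v : V, ∃ w : (j : Fin (J + 2)) → W j, ∑ j, ((w j : V)) = v)
    (Q : (j : Fin (J + 2)) → V →ₗ[ℝ] W j)
    (hQ : ∀ (j : Fin (J + 2)) (v : V) (w : W j), ⟪Q j v, w⟫ = ⟪v, (w : V)⟫)
    (A₀ T₀ : W 0 →ₗ[ℝ] W 0)
    (hA₀sym : ∀ u v : W 0, ⟪A₀ u, v⟫ = ⟪u, A₀ v⟫)
    (hA₀pos : ∀ v : W 0, v ≠ 0 → 0 < ⟪A₀ v, v⟫)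
    (hT₀' : A₀ ∘ₗ T₀ = LinearMap.id)
    (R T : (j : Fin (J + 2)) → (W j →ₗ[ℝ] W j))
    (hRsym : ∀ j : Fin (J + 2), j ≠ 0 → ∀ u v : W j, ⟪R j u, v⟫ = ⟪u, R j v⟫)
    (hRpos : ∀ j : Fin (J + 2), j ≠ 0 → ∀ v : W j, v ≠ 0 → 0 < ⟪R j v, v⟫)
    (hT' : ∀ j : Fin (J + 2), j ≠ 0 → R j ∘ₗ T j = LinearMap.id)
    (B : V →ₗ[ℝ] V)
    (hB : B = (W 0).subtype ∘ₗ T₀ ∘ₗ Q 0 +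
      ∑ j ∈ Finset.univ.erase 0, (W j).subtype ∘ₗ T j ∘ₗ Q j) :
    (∀ u v : V, ⟪B u, v⟫ = ⟪u, B v⟫) ∧ (∀ v : V, v ≠ 0 → 0 < ⟪B v, v⟫) ∧
    (∀ Binv : V →ₗ[ℝ] V, Binv ∘ₗ B = LinearMap.id → B ∘ₗ Binv = LinearMap.id →
      ∀ v : V, ⟪Binv v, v⟫ =
        ⨅ w : {w : (j : Fin (J + 2)) → W j // ∑ j, ((w j : V)) = v},
          (⟪A₀ (w.1 0), w.1 0⟫ +
            ∑ j ∈ Finset.univ.erase 0, ⟪R j (w.1 j), w.1 j⟫)) := by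
  set R' := Function.update R 0 A₀
  set T' := Function.update T 0 T₀
  have hR'sym : ∀ j, (R' j).IsSymmetric :=
    (Function.forall_update_iff R fun _ S => S.IsSymmetric).2 ⟨hA₀sym, hRsym⟩
  have hR'pos : ∀ j (x : W j), x ≠ 0 → 0 < ⟪R' j x, x⟫ :=
    (Function.forall_update_iff R fun _ S => ∀ x, x ≠ 0 → 0 < ⟪S x, x⟫).2 ⟨hA₀pos, hRpos⟩
  have hR'T' : ∀ j, R' j ∘ₗ T' j = LinearMap.id := fun j => by
    rcases eq_or_ne j 0 with rfl | hj
    · simpa [R', T'] using hT₀'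
    · simpa [R', T', Function.update_of_ne hj] using hT' j hj
  have hB' : B = additivePreconditioner W Q T' := by
    rw [hB, additivePreconditioner,
      Finset.sum_update_eq_add_sum_erase T 0 T₀ fun j S => (W j).subtype ∘ₗ S ∘ₗ Q j]
  subst hB'
  refine ⟨additivePreconditioner_isSymmetric hQ fun j => (hR'sym j).of_comp_eq_id (hR'T' j),
    fun v => inner_additivePreconditioner_self_pos hQ hspan fun j =>
      inner_map_self_pos_of_comp_eq_id (hR'sym j) (hR'pos j) (hR'T' j),
    fun Binv _ hBBinv v => ?_⟩
  have hv : additivePreconditioner W Q T' (Binv v) = v := LinearMap.congr_fun hBBinv v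
  generalize Binv v = u at hv ⊢
  subst hv
  have henergy : ∀ w : ∀ j, W j, ⟪A₀ (w 0), w 0⟫ + ∑ j ∈ Finset.univ.erase 0, ⟪R j (w j), w j⟫ =
      ∑ j, ⟪R' j (w j), w j⟫ := fun w =>
    (Finset.sum_update_eq_add_sum_erase R 0 A₀ fun j S => ⟪S (w j), w j⟫).symm
  simp only [henergy]
  exact inner_additivePreconditioner_self_eq_iInf hQ hR'T' hR'sym
    (fun j => inner_map_self_nonneg_of_pos (hR'pos j)) u

theorem multilevel_additive_preconditioner_identity
    {V : Type*} [NormedAddCommGroup V] [InnerProductSpace ℝ V] [FiniteDimensional ℝ V]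
    (J : ℕ) (W : Fin (J + 2) → Submodule ℝ V)
    (hspan : ∀ v : V, ∃ w : (j : Fin (J + 2)) → W j, ∑ j, ((w j : V)) = v)
    (Q : (j : Fin (J + 2)) → V →ₗ[ℝ] W j)
    (hQ : ∀ (j : Fin (J + 2)) (v : V) (w : W j), ⟪Q j v, w⟫ = ⟪v, (w : V)⟫)
    (A₀ T₀ : W 0 →ₗ[ℝ] W 0)
    (hA₀sym : ∀ u v : W 0, ⟪A₀ u, v⟫ = ⟪u, A₀ v⟫)
    (hA₀pos : ∀ v : W 0, v ≠ 0 → 0 < ⟪A₀ v, v⟫)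
    (hT₀ : T₀ ∘ₗ A₀ = LinearMap.id) (hT₀' : A₀ ∘ₗ T₀ = LinearMap.id)
    (R T : (j : Fin (J + 2)) → (W j →ₗ[ℝ] W j))
    (hRsym : ∀ j : Fin (J + 2), j ≠ 0 → ∀ u v : W j, ⟪R j u, v⟫ = ⟪u, R j v⟫)
    (hRpos : ∀ j : Fin (J + 2), j ≠ 0 → ∀ v : W j, v ≠ 0 → 0 < ⟪R j v, v⟫)
    (hT : ∀ j : Fin (J + 2), j ≠ 0 → T j ∘ₗ R j = LinearMap.id)
    (hT' : ∀ j : Fin (J + 2), j ≠ 0 → R j ∘ₗ T j = LinearMap.id)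
    (B : V →ₗ[ℝ] V)
    (hB : B = (W 0).subtype ∘ₗ T₀ ∘ₗ Q 0 +
      ∑ j ∈ Finset.univ.erase 0, (W j).subtype ∘ₗ T j ∘ₗ Q j) :
    (∀ u v : V, ⟪B u, v⟫ = ⟪u, B v⟫) ∧ (∀ v : V, v ≠ 0 → 0 < ⟪B v, v⟫) ∧
    (∀ Binv : V →ₗ[ℝ] V, Binv ∘ₗ B = LinearMap.id → B ∘ₗ Binv = LinearMap.id →
      ∀ v : V, ⟪Binv v, v⟫ =
        ⨅ w : {w : (j : Fin (J + 2)) → W j // ∑ j, ((w j : V)) = v},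
          (⟪A₀ (w.1 0), w.1 0⟫ +
            ∑ j ∈ Finset.univ.erase 0, ⟪R j (w.1 j), w.1 j⟫)) :=
  multilevel_additive_preconditioner_identity_general J W hspan Q hQ A₀ T₀ hA₀sym hA₀pos hT₀' R T
    hRsym hRpos hT' B hB
end
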